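/- arXiv:1609.09602 — 3 statements merged into one kernel-verified Lean document; each statement's English description precedes it below -/
import Mathlib

section
/- Let C, D ⊆ {0,1}ⁿ be neural codes on the same number n of neurons. Then the canonical form of the neural ideal of their union equals the set of minimal reduced products of their canonical forms: CF(J_{C∪D}) = MP(C, D). -/
open MvPolynomial

/-- The characteristic polynomial `ρ_v = ∏ i, (1 - v_i - x_i)` of a word `v ∈ {0,1}ⁿ = 𝔽₂ⁿ`. -/
noncomputable def rho (n : ℕ) (v : Fin n → ZMod 2) : MvPolynomial (Fin n) (ZMod 2) :=
  ∏ i, (1 - C (v i) - X i)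

/-- The neural ideal `J_C = ⟨ρ_v : v ∉ C⟩` of a neural code `C ⊆ {0,1}ⁿ`. -/
noncomputable def neuralIdeal (n : ℕ) (Co : Set (Fin n → ZMod 2)) :
    Ideal (MvPolynomial (Fin n) (ZMod 2)) :=
  Ideal.span { p | ∃ v, v ∉ Co ∧ p = rho n v }

/-- A pseudo-monomial: `∏_{i∈σ} x_i ∏_{j∈τ} (1 - x_j)` with `σ, τ` disjoint. -/
def IsPseudoMonomial (n : ℕ) (f : MvPolynomial (Fin n) (ZMod 2)) : Prop :=
  ∃ σ τ : Finset (Fin n), Disjoint σ τ ∧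
    f = (∏ i ∈ σ, X i) * ∏ j ∈ τ, (1 - X j)

/-- `f` is a minimal pseudo-monomial of the ideal `J`. -/
def IsMinimalPM (n : ℕ) (J : Ideal (MvPolynomial (Fin n) (ZMod 2)))
    (f : MvPolynomial (Fin n) (ZMod 2)) : Prop :=
  f ∈ J ∧ IsPseudoMonomial n f ∧
    ¬ ∃ g, IsPseudoMonomial n g ∧ g ∈ J ∧ g.totalDegree < f.totalDegree ∧
      ∃ h, f = g * h

/-- The canonical form `CF(J)`: the set of all minimal pseudo-monomials of `J`. -/
def CF (n : ℕ) (J : Ideal (MvPolynomial (Fin n) (ZMod 2))) :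
    Set (MvPolynomial (Fin n) (ZMod 2)) :=
  { f | IsMinimalPM n J f }

/-- An ideal is a pseudo-monomial ideal if it is generated by finitely many pseudo-monomials. -/
def IsPseudoMonomialIdeal (n : ℕ) (J : Ideal (MvPolynomial (Fin n) (ZMod 2))) : Prop :=
  ∃ S : Finset (MvPolynomial (Fin n) (ZMod 2)),
    (∀ f ∈ S, IsPseudoMonomial n f) ∧ J = Ideal.span (S : Set (MvPolynomial (Fin n) (ZMod 2)))

/-- A polynomial is square-free if every variable occurs with exponent at most 1
in every monomial of its support. -/
def IsSquareFreePoly (n : ℕ) (f : MvPolynomial (Fin n) (ZMod 2)) : Prop :=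
  ∀ m ∈ f.support, ∀ i, m i ≤ 1

/-- The Boolean ideal `B = ⟨x_i (1 - x_i) : 1 ≤ i ≤ n⟩`. -/
noncomputable def boolIdeal (n : ℕ) : Ideal (MvPolynomial (Fin n) (ZMod 2)) :=
  Ideal.span { p | ∃ i : Fin n, p = X i * (1 - X i) }

/-- The square-free representative `h_R` of `h` modulo the Boolean ideal:
replace every exponent by its truncation at 1. -/
noncomputable def sqReduce (n : ℕ) (h : MvPolynomial (Fin n) (ZMod 2)) :
    MvPolynomial (Fin n) (ZMod 2) :=
  ∑ m ∈ h.support,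
    monomial (Finsupp.mapRange (fun e => min e 1) (by simp) m) (coeff m h)

/-- The set of reduced products `P(C,D) = {(f g)_R : f ∈ CF(J_C), g ∈ CF(J_D)}`. -/
def reducedProducts (n : ℕ) (Co D : Set (Fin n → ZMod 2)) :
    Set (MvPolynomial (Fin n) (ZMod 2)) :=
  { p | ∃ f ∈ CF n (neuralIdeal n Co), ∃ g ∈ CF n (neuralIdeal n D), p = sqReduce n (f * g) }

/-- The set of minimal reduced products `MP(C,D)`. -/
def minReducedProducts (n : ℕ) (Co D : Set (Fin n → ZMod 2)) :
    Set (MvPolynomial (Fin n) (ZMod 2)) :=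
  { h | h ∈ reducedProducts n Co D ∧ h ≠ 0 ∧
    ¬ ∃ f ∈ reducedProducts n Co D, ∃ g : MvPolynomial (Fin n) (ZMod 2),
      1 ≤ g.totalDegree ∧ h = f * g }

/-- The code `C(U)` of a cover `U = {U_1, …, U_n}` of a topological space `X`. -/
def codeOfCover {X : Type*} [TopologicalSpace X] (n : ℕ) (U : Fin n → Set X) :
    Set (Fin n → ZMod 2) :=
  { v | ((⋂ i ∈ { i : Fin n | v i = 1 }, U i) \ ⋃ j ∈ { j : Fin n | v j = 0 }, U j).Nonempty }
section Aux
open Finset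

variable {n : ℕ}

/-- pseudo-monomial -/
noncomputable def pm {n : ℕ} (σ τ : Finset (Fin n)) : MvPolynomial (Fin n) (ZMod 2) :=
  (∏ i ∈ σ, X i) * ∏ j ∈ τ, (1 - X j)

lemma z01 (a : ZMod 2) : a = 0 ∨ a = 1 := by revert a; decide

lemma zne (a : ZMod 2) : a = 1 ↔ a ≠ 0 := by revert a; decide

lemma zmul1 (a b : ZMod 2) : a * b = 1 ↔ a = 1 ∧ b = 1 := by revert a b; decide

lemma zext {a b : ZMod 2} (h : a = 1 ↔ b = 1) : a = b := by revert h; revert a b; decide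

lemma eval_pm (v : Fin n → ZMod 2) (σ τ : Finset (Fin n)) :
    eval v (pm σ τ) = (∏ i ∈ σ, v i) * ∏ j ∈ τ, (1 - v j) := by
  simp [pm]

lemma eval_pm_one_iff (v : Fin n → ZMod 2) (σ τ : Finset (Fin n)) :
    eval v (pm σ τ) = 1 ↔ (∀ i ∈ σ, v i = 1) ∧ (∀ j ∈ τ, v j = 0) := by
  rw [eval_pm, zmul1]
  constructor
  · rintro ⟨h1, h2⟩
    constructor
    · intro i hi
      rw [zne]
      intro h0
      rw [Finset.prod_eq_zero hi h0] at h1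
      exact absurd h1 (by decide)
    · intro j hj
      have hne2 : (1 : ZMod 2) - v j ≠ 0 := by
        intro h0
        rw [Finset.prod_eq_zero hj h0] at h2
        exact absurd h2 (by decide)
      revert hne2; generalize v j = a; revert a; decide
  · rintro ⟨h1, h2⟩
    refine ⟨Finset.prod_eq_one fun i hi => h1 i hi, Finset.prod_eq_one fun j hj => ?_⟩
    rw [h2 j hj, sub_zero]

lemma pm_ne_zero {σ τ : Finset (Fin n)} (hd : Disjoint σ τ) : pm σ τ ≠ 0 := by
  intro h0
  have h1 : eval (fun i => if i ∈ σ then 1 else 0) (pm σ τ) = 1 :=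
    (eval_pm_one_iff _ _ _).mpr
      ⟨fun i hi => if_pos hi, fun j hj => if_neg (Finset.disjoint_right.mp hd hj)⟩
  rw [h0, map_zero] at h1
  exact absurd h1 (by decide)
lemma sf_zero : IsSquareFreePoly n 0 := by
  intro m hm
  simp at hm

lemma sf_sub {p q : MvPolynomial (Fin n) (ZMod 2)} (hp : IsSquareFreePoly n p)
    (hq : IsSquareFreePoly n q) : IsSquareFreePoly n (p - q) := by
  intro m hm i
  rcases Finset.mem_union.mp (MvPolynomial.support_sub _ p q hm) with h | h
  · exact hp m h i
  · exact hq m h i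

lemma sf_sum {α : Type*} (s : Finset α) (f : α → MvPolynomial (Fin n) (ZMod 2))
    (hf : ∀ a ∈ s, IsSquareFreePoly n (f a)) : IsSquareFreePoly n (∑ a ∈ s, f a) := by
  intro m hm i
  obtain ⟨a, ha, hma⟩ := Finset.mem_biUnion.mp (MvPolynomial.support_sum hm)
  exact hf a ha m hma i

lemma sf_eq_zero {p : MvPolynomial (Fin n) (ZMod 2)} (hp : IsSquareFreePoly n p)
    (h : ∀ v, eval v p = 0) : p = 0 := by
  refine MvPolynomial.eq_zero_of_eval_eq_zero (K := ZMod 2) (σ := Fin n) p h ?_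
  rw [MvPolynomial.mem_restrictDegree]
  intro s hs i
  have hc : Fintype.card (ZMod 2) - 1 = 1 := by rw [ZMod.card]
  rw [hc]
  exact hp s hs i

lemma sf_eq {p q : MvPolynomial (Fin n) (ZMod 2)} (hp : IsSquareFreePoly n p)
    (hq : IsSquareFreePoly n q) (h : ∀ v, eval v p = eval v q) : p = q := by
  have h0 := sf_eq_zero (sf_sub hp hq) (fun v => by rw [map_sub, h v, sub_self])
  exact sub_eq_zero.mp h0

lemma support_prod_le (s : Finset (Fin n)) (f : Fin n → MvPolynomial (Fin n) (ZMod 2))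
    (hf : ∀ i ∈ s, ∀ m ∈ (f i).support, ∀ j, m j ≤ if j = i then 1 else 0) :
    ∀ m ∈ (∏ i ∈ s, f i).support, ∀ j, m j ≤ if j ∈ s then 1 else 0 := by
  classical
  induction s using Finset.induction_on with
  | empty =>
    intro m hm j
    rw [Finset.prod_empty] at hm
    have hm0 : m = 0 := by
      have h1 := MvPolynomial.mem_support_iff.mp hm
      rw [MvPolynomial.coeff_one] at h1
      by_contra hne
      rw [if_neg (fun h => hne h.symm)] at h1
      exact h1 rfl
    simp [hm0]
  | @insert a s ha ih =>
    intro m hm j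
    rw [Finset.prod_insert ha] at hm
    obtain ⟨m₁, hm₁, m₂, hm₂, rfl⟩ := Finset.mem_add.mp (MvPolynomial.support_mul _ _ hm)
    have b₁ := hf a (Finset.mem_insert_self a s) m₁ hm₁ j
    have b₂ := ih (fun i hi => hf i (Finset.mem_insert_of_mem hi)) m₂ hm₂ j
    have : (m₁ + m₂) j = m₁ j + m₂ j := rfl
    rw [this]
    by_cases hja : j = a
    · subst hja
      rw [if_pos rfl] at b₁
      rw [if_neg ha] at b₂
      rw [if_pos (Finset.mem_insert_self j s)]
      omega
    · rw [if_neg hja] at b₁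
      by_cases hjs : j ∈ s
      · rw [if_pos hjs] at b₂
        rw [if_pos (Finset.mem_insert_of_mem hjs)]
        omega
      · rw [if_neg hjs] at b₂
        rw [if_neg (by simp [hja, hjs])]
        omega

lemma pm_eq_prod {σ τ : Finset (Fin n)} (hd : Disjoint σ τ) :
    pm σ τ = ∏ i ∈ σ ∪ τ, (if i ∈ σ then X i else 1 - X i) := by
  rw [pm, Finset.prod_union hd]
  congr 1
  · exact Finset.prod_congr rfl fun i hi => (if_pos hi).symm
  · exact Finset.prod_congr rfl fun j hj => (if_neg (Finset.disjoint_right.mp hd hj)).symm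

lemma sf_pm {σ τ : Finset (Fin n)} (hd : Disjoint σ τ) : IsSquareFreePoly n (pm σ τ) := by
  rw [pm_eq_prod hd]
  intro m hm i
  have key := support_prod_le (σ ∪ τ) _ ?_ m hm i
  · split at key
    · exact key
    · omega
  · intro i hi m hm j
    by_cases his : i ∈ σ
    · rw [if_pos his] at hm
      rw [MvPolynomial.support_X] at hm
      rw [Finset.mem_singleton.mp hm, Finsupp.single_apply]
      split <;> split <;> omega
    · rw [if_neg his] at hm
      rcases Finset.mem_union.mp (MvPolynomial.support_sub _ _ _ hm) with h | h
      · have h1 := MvPolynomial.mem_support_iff.mp h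
        rw [MvPolynomial.coeff_one] at h1
        have hm0 : m = 0 := by
          by_contra hne
          rw [if_neg (fun h => hne h.symm)] at h1
          exact h1 rfl
        simp [hm0]
      · rw [MvPolynomial.support_X] at h
        rw [Finset.mem_singleton.mp h, Finsupp.single_apply]
        split <;> split <;> omega
lemma rho_eq_pm (v : Fin n → ZMod 2) :
    rho n v = pm (Finset.univ.filter (fun i => v i = 1)) (Finset.univ.filter (fun i => v i = 0)) := by
  have hdv : Disjoint (Finset.univ.filter (fun i => v i = 1)) (Finset.univ.filter (fun i => v i = 0)) := by
    rw [Finset.disjoint_left]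
    intro i hi1 hi0
    rw [Finset.mem_filter] at hi1 hi0
    rw [hi1.2] at hi0
    exact absurd hi0.2 (by decide)
  rw [pm_eq_prod hdv, rho]
  have hu : (Finset.univ.filter (fun i => v i = 1)) ∪ (Finset.univ.filter (fun i => v i = 0)) = Finset.univ := by
    ext i
    simp only [Finset.mem_union, Finset.mem_filter, Finset.mem_univ, true_and, iff_true]
    rcases z01 (v i) with h | h
    · exact Or.inr h
    · exact Or.inl h
  rw [hu]
  apply Finset.prod_congr rfl
  intro i _
  by_cases h : v i = 1
  · rw [if_pos (by simp [h]), h, map_one]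
    have he : (1 : MvPolynomial (Fin n) (ZMod 2)) - 1 - X i = -(X i) := by ring
    rw [he, CharTwo.neg_eq]
  · have h0 : v i = 0 := (z01 _).resolve_right h
    rw [if_neg (by simp [h0]), h0, map_zero, sub_zero]

lemma sf_rho (v : Fin n → ZMod 2) : IsSquareFreePoly n (rho n v) := by
  rw [rho_eq_pm]
  apply sf_pm
  rw [Finset.disjoint_left]
  intro i hi1 hi0
  rw [Finset.mem_filter] at hi1 hi0
  rw [hi1.2] at hi0
  exact absurd hi0.2 (by decide)

lemma eval_rho (w v : Fin n → ZMod 2) : eval w (rho n v) = if w = v then 1 else 0 := by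
  rw [rho, map_prod]
  simp only [map_sub, map_one, eval_C, eval_X]
  by_cases h : w = v
  · subst h
    rw [if_pos rfl]
    apply Finset.prod_eq_one
    intro i _
    generalize w i = a
    revert a; decide
  · rw [if_neg h]
    obtain ⟨i, hi⟩ : ∃ i, w i ≠ v i := by
      by_contra hc
      push_neg at hc
      exact h (funext hc)
    apply Finset.prod_eq_zero (Finset.mem_univ i)
    revert hi
    generalize w i = a
    generalize v i = b
    revert a b; decide

lemma eval_zero_of_mem {Co : Set (Fin n → ZMod 2)} {f : MvPolynomial (Fin n) (ZMod 2)}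
    (hf : f ∈ neuralIdeal n Co) {c : Fin n → ZMod 2} (hc : c ∈ Co) : eval c f = 0 := by
  have hle : neuralIdeal n Co ≤ RingHom.ker (eval c) := by
    rw [neuralIdeal, Ideal.span_le]
    rintro p ⟨v, hv, rfl⟩
    rw [SetLike.mem_coe, RingHom.mem_ker, eval_rho, if_neg]
    rintro rfl
    exact hv hc
  exact RingHom.mem_ker.mp (hle hf)

lemma pm_mem_iff {σ τ : Finset (Fin n)} (hd : Disjoint σ τ) (Co : Set (Fin n → ZMod 2)) :
    pm σ τ ∈ neuralIdeal n Co ↔ ∀ c ∈ Co, eval c (pm σ τ) = 0 := by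
  constructor
  · exact fun h c hc => eval_zero_of_mem h hc
  · intro h
    have key : pm σ τ = ∑ v ∈ Finset.univ.filter (fun v => eval v (pm σ τ) = 1), rho n v := by
      apply sf_eq (sf_pm hd) (sf_sum _ _ fun v _ => sf_rho v)
      intro w
      rw [map_sum]
      have hterm : ∀ v ∈ Finset.univ.filter (fun v => eval v (pm σ τ) = 1),
          eval w (rho n v) = if w = v then (1 : ZMod 2) else 0 := fun v _ => eval_rho w v
      rw [Finset.sum_congr rfl hterm, Finset.sum_ite_eq]
      by_cases hmem : w ∈ Finset.univ.filter (fun v => eval v (pm σ τ) = 1)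
      · rw [if_pos hmem]
        exact (Finset.mem_filter.mp hmem).2
      · rw [if_neg hmem]
        have hw : ¬ eval w (pm σ τ) = 1 := fun h1 =>
          hmem (Finset.mem_filter.mpr ⟨Finset.mem_univ w, h1⟩)
        exact (z01 _).resolve_right hw
    rw [key]
    apply Ideal.sum_mem
    intro v hv
    apply Ideal.subset_span
    refine ⟨v, ?_, rfl⟩
    intro hvCo
    have h0 := h v hvCo
    rw [(Finset.mem_filter.mp hv).2] at h0
    exact absurd h0 (by decide)
lemma zpow_min (a : ZMod 2) (e : ℕ) : a ^ min e 1 = a ^ e := by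
  cases e with
  | zero => rfl
  | succ k =>
    rw [min_eq_right (by omega), pow_one]
    rcases z01 a with rfl | rfl
    · rw [zero_pow (Nat.succ_ne_zero k)]
    · rw [one_pow]

lemma eval_sqReduce (v : Fin n → ZMod 2) (h : MvPolynomial (Fin n) (ZMod 2)) :
    eval v (sqReduce n h) = eval v h := by
  conv_rhs => rw [← MvPolynomial.support_sum_monomial_coeff h]
  rw [sqReduce, map_sum, map_sum]
  apply Finset.sum_congr rfl
  intro m _
  rw [eval_monomial, eval_monomial]
  congr 1
  rw [Finsupp.prod_fintype _ _ (fun i => pow_zero (v i)),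
      Finsupp.prod_fintype _ _ (fun i => pow_zero (v i))]
  apply Finset.prod_congr rfl
  intro i _
  rw [Finsupp.mapRange_apply, zpow_min]

lemma sf_sqReduce (h : MvPolynomial (Fin n) (ZMod 2)) : IsSquareFreePoly n (sqReduce n h) := by
  rw [sqReduce]
  apply sf_sum
  intro m _ m' hm' i
  have hsub := MvPolynomial.support_monomial_subset hm'
  rw [Finset.mem_singleton.mp hsub, Finsupp.mapRange_apply]
  omega

lemma sqReduce_pm_mul {σ₁ τ₁ σ₂ τ₂ : Finset (Fin n)} (h1 : Disjoint σ₁ τ₁) (h2 : Disjoint σ₂ τ₂)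
    (hd : Disjoint (σ₁ ∪ σ₂) (τ₁ ∪ τ₂)) :
    sqReduce n (pm σ₁ τ₁ * pm σ₂ τ₂) = pm (σ₁ ∪ σ₂) (τ₁ ∪ τ₂) := by
  apply sf_eq (sf_sqReduce _) (sf_pm hd)
  intro v
  rw [eval_sqReduce, map_mul]
  apply zext
  rw [zmul1, eval_pm_one_iff, eval_pm_one_iff, eval_pm_one_iff]
  constructor
  · rintro ⟨⟨a1, b1⟩, ⟨a2, b2⟩⟩
    exact ⟨fun i hi => (Finset.mem_union.mp hi).elim (a1 i) (a2 i),
           fun j hj => (Finset.mem_union.mp hj).elim (b1 j) (b2 j)⟩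
  · rintro ⟨a, b⟩
    exact ⟨⟨fun i hi => a i (Finset.mem_union_left _ hi),
            fun j hj => b j (Finset.mem_union_left _ hj)⟩,
           ⟨fun i hi => a i (Finset.mem_union_right _ hi),
            fun j hj => b j (Finset.mem_union_right _ hj)⟩⟩

lemma sqReduce_pm_mul_zero {σ₁ τ₁ σ₂ τ₂ : Finset (Fin n)}
    (hd : ¬ Disjoint (σ₁ ∪ σ₂) (τ₁ ∪ τ₂)) :
    sqReduce n (pm σ₁ τ₁ * pm σ₂ τ₂) = 0 := by
  apply sf_eq (sf_sqReduce _) sf_zero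
  intro v
  rw [eval_sqReduce, map_mul, map_zero]
  obtain ⟨i, hiu, hit⟩ := Finset.not_disjoint_iff.mp hd
  rcases z01 (eval v (pm σ₁ τ₁) * eval v (pm σ₂ τ₂)) with h | h
  · exact h
  · exfalso
    rw [zmul1, eval_pm_one_iff, eval_pm_one_iff] at h
    have hv1 : v i = 1 := (Finset.mem_union.mp hiu).elim (fun h' => h.1.1 i h') (fun h' => h.2.1 i h')
    have hv0 : v i = 0 := (Finset.mem_union.mp hit).elim (fun h' => h.1.2 i h') (fun h' => h.2.2 i h')
    rw [hv1] at hv0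
    exact absurd hv0 (by decide)

lemma pm_dvd_structure {s t σ τ : Finset (Fin n)} (hd : Disjoint σ τ)
    (h : ∃ q, pm σ τ = pm s t * q) : s ⊆ σ ∧ t ⊆ τ := by
  obtain ⟨q, hq⟩ := h
  have key : ∀ v, eval v (pm σ τ) = 1 → eval v (pm s t) = 1 := by
    intro v hv
    rw [hq, map_mul] at hv
    exact ((zmul1 _ _).mp hv).1
  constructor
  · intro i hi
    have h1 : eval (fun j => if j ∈ σ then 1 else 0) (pm σ τ) = 1 :=
      (eval_pm_one_iff _ _ _).mpr
        ⟨fun i hi => if_pos hi, fun j hj => if_neg (Finset.disjoint_right.mp hd hj)⟩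
    have h2 := ((eval_pm_one_iff _ _ _).mp (key _ h1)).1 i hi
    by_contra hns
    rw [if_neg hns] at h2
    exact absurd h2 (by decide)
  · intro j hj
    have h1 : eval (fun k => if k ∈ τ then 0 else 1) (pm σ τ) = 1 :=
      (eval_pm_one_iff _ _ _).mpr
        ⟨fun i hi => if_neg (Finset.disjoint_left.mp hd hi), fun j hj => if_pos hj⟩
    have h2 := ((eval_pm_one_iff _ _ _).mp (key _ h1)).2 j hj
    by_contra hnt
    rw [if_neg hnt] at h2
    exact absurd h2 (by decide)

lemma pm_mul_sdiff {s t σ τ : Finset (Fin n)} (hs : s ⊆ σ) (ht : t ⊆ τ) :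
    pm s t * pm (σ \ s) (τ \ t) = pm σ τ := by
  rw [pm, pm, pm]
  have h1 : (∏ i ∈ s, (X i : MvPolynomial (Fin n) (ZMod 2))) * ∏ i ∈ σ \ s, X i
      = ∏ i ∈ σ, X i := by
    rw [← Finset.prod_union (Finset.disjoint_sdiff), Finset.union_sdiff_of_subset hs]
  have h2 : (∏ j ∈ t, (1 - X j : MvPolynomial (Fin n) (ZMod 2))) * ∏ j ∈ τ \ t, (1 - X j)
      = ∏ j ∈ τ, (1 - X j) := by
    rw [← Finset.prod_union (Finset.disjoint_sdiff), Finset.union_sdiff_of_subset ht]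
  rw [← h1, ← h2]
  ring
noncomputable def chi {n : ℕ} (s : Finset (Fin n)) : Fin n →₀ ℕ := ∑ i ∈ s, Finsupp.single i 1

lemma chi_apply (s : Finset (Fin n)) (j : Fin n) : chi s j = if j ∈ s then 1 else 0 := by
  classical
  rw [chi, Finset.sum_apply']
  rw [Finset.sum_congr rfl (fun i _ => Finsupp.single_apply (a := i) (b := 1) (a' := j)),
      Finset.sum_ite_eq' s j (fun _ => 1)]

lemma chi_inj {s t : Finset (Fin n)} (h : chi s = chi t) : s = t := by
  ext i
  have h1 := DFunLike.congr_fun h i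
  rw [chi_apply, chi_apply] at h1
  by_cases hs : i ∈ s <;> by_cases ht : i ∈ t <;> simp [hs, ht] at h1 ⊢

lemma prod_X_eq (s : Finset (Fin n)) :
    (∏ i ∈ s, (X i : MvPolynomial (Fin n) (ZMod 2))) = monomial (chi s) 1 := by
  classical
  induction s using Finset.induction_on with
  | empty => simp [chi]
  | @insert a s ha ih =>
    have hchi : chi (insert a s) = Finsupp.single a 1 + chi s := by
      rw [chi, chi, Finset.sum_insert ha]
    rw [Finset.prod_insert ha, ih, X, monomial_mul, one_mul, hchi]

lemma coeff_chi_pm {σ τ : Finset (Fin n)} (hd : Disjoint σ τ) :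
    coeff (chi (σ ∪ τ)) (pm σ τ) = 1 := by
  classical
  have hrw : pm σ τ = ∏ i ∈ σ ∪ τ, (X i + C (if i ∈ σ then 0 else 1)) := by
    rw [pm_eq_prod hd]
    apply Finset.prod_congr rfl
    intro i _
    by_cases h : i ∈ σ
    · simp [h]
    · rw [if_neg h, if_neg h, map_one, CharTwo.sub_eq_add, add_comm]
  rw [hrw, Finset.prod_add, MvPolynomial.coeff_sum]
  have hterm : ∀ t ∈ (σ ∪ τ).powerset,
      coeff (chi (σ ∪ τ)) ((∏ i ∈ t, (X i : MvPolynomial (Fin n) (ZMod 2)))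
        * ∏ i ∈ (σ ∪ τ) \ t, C (if i ∈ σ then (0 : ZMod 2) else 1))
      = if t = σ ∪ τ then 1 else 0 := by
    intro t ht
    rw [prod_X_eq, ← map_prod C (fun i => if i ∈ σ then (0 : ZMod 2) else 1), mul_comm,
        MvPolynomial.C_mul_monomial, MvPolynomial.coeff_monomial]
    by_cases heq : t = σ ∪ τ
    · subst heq
      rw [if_pos rfl, if_pos rfl, Finset.sdiff_self, Finset.prod_empty, mul_one]
    · rw [if_neg heq, if_neg (fun hc => heq (chi_inj hc))]
  rw [Finset.sum_congr rfl hterm, Finset.sum_ite_eq' (σ ∪ τ).powerset (σ ∪ τ) (fun _ => (1 : ZMod 2)),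
      if_pos (Finset.mem_powerset.mpr (le_refl _))]

lemma chi_sum (s : Finset (Fin n)) : ((chi s).sum fun _ e => e) = s.card := by
  classical
  rw [Finsupp.sum_fintype _ _ (fun _ => rfl)]
  rw [Finset.sum_congr rfl (fun i _ => chi_apply s i)]
  rw [Finset.sum_ite_mem, Finset.univ_inter, Finset.sum_const, smul_eq_mul, mul_one]

lemma deg_pm {σ τ : Finset (Fin n)} (hd : Disjoint σ τ) :
    (pm σ τ).totalDegree = σ.card + τ.card := by
  apply le_antisymm
  · refine le_trans (MvPolynomial.totalDegree_mul _ _) ?_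
    have h1 : (∏ i ∈ σ, (X i : MvPolynomial (Fin n) (ZMod 2))).totalDegree ≤ σ.card := by
      refine le_trans (MvPolynomial.totalDegree_finset_prod _ _) ?_
      rw [Finset.card_eq_sum_ones σ]
      exact Finset.sum_le_sum fun i _ => le_of_eq (MvPolynomial.totalDegree_X i)
    have h2 : (∏ j ∈ τ, ((1 : MvPolynomial (Fin n) (ZMod 2)) - X j)).totalDegree ≤ τ.card := by
      refine le_trans (MvPolynomial.totalDegree_finset_prod _ _) ?_
      rw [Finset.card_eq_sum_ones τ]
      refine Finset.sum_le_sum fun j _ => ?_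
      refine le_trans (MvPolynomial.totalDegree_sub _ _) ?_
      rw [MvPolynomial.totalDegree_one, MvPolynomial.totalDegree_X]
      omega
    omega
  · have hmem : chi (σ ∪ τ) ∈ (pm σ τ).support :=
      MvPolynomial.mem_support_iff.mpr (by rw [coeff_chi_pm hd]; exact one_ne_zero)
    have hle := MvPolynomial.le_totalDegree hmem
    rwa [chi_sum, Finset.card_union_of_disjoint hd] at hle
lemma eq_C_of_deg_zero {p : MvPolynomial (Fin n) (ZMod 2)} (h : p.totalDegree = 0) :
    p = C (coeff 0 p) := by
  rw [MvPolynomial.totalDegree_eq_zero_iff] at h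
  ext m
  rw [MvPolynomial.coeff_C]
  by_cases hm : m = 0
  · subst hm
    rw [if_pos rfl]
  · rw [if_neg (fun he => hm he.symm)]
    by_contra hne
    have hmem : m ∈ p.support := MvPolynomial.mem_support_iff.mpr hne
    exact hm (Finsupp.ext fun i => h m hmem i)

lemma exists_min_divisor (J : Ideal (MvPolynomial (Fin n) (ZMod 2))) :
    ∀ (d : ℕ) (f : MvPolynomial (Fin n) (ZMod 2)), f.totalDegree = d →
      IsPseudoMonomial n f → f ∈ J →
      ∃ g, IsMinimalPM n J g ∧ ∃ q, f = g * q := by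
  intro d
  induction d using Nat.strong_induction_on with
  | _ d ih =>
    intro f hdeg hf hmem
    by_cases hc : ∃ g, IsPseudoMonomial n g ∧ g ∈ J ∧ g.totalDegree < f.totalDegree ∧
        ∃ h, f = g * h
    · obtain ⟨g, hg1, hg2, hg3, q, hq⟩ := hc
      obtain ⟨g', hg', q', hq'⟩ := ih g.totalDegree (hdeg ▸ hg3) g rfl hg1 hg2
      exact ⟨g', hg', q' * q, by rw [hq, hq', mul_assoc]⟩
    · exact ⟨f, ⟨hmem, hf, hc⟩, 1, (mul_one f).symm⟩
lemma pm_union_mem {sa ta sb tb : Finset (Fin n)} {Co D : Set (Fin n → ZMod 2)}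
    (ha : pm sa ta ∈ neuralIdeal n Co) (hb : pm sb tb ∈ neuralIdeal n D)
    (hdu : Disjoint (sa ∪ sb) (ta ∪ tb)) :
    pm (sa ∪ sb) (ta ∪ tb) ∈ neuralIdeal n (Co ∪ D) := by
  rw [pm_mem_iff hdu]
  intro c hc
  rcases hc with hc | hc
  · rw [← pm_mul_sdiff (Finset.subset_union_left (s₂ := sb)) (Finset.subset_union_left (s₂ := tb)),
        map_mul, eval_zero_of_mem ha hc, zero_mul]
  · rw [← pm_mul_sdiff (Finset.subset_union_right (s₁ := sa)) (Finset.subset_union_right (s₁ := ta)),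
        map_mul, eval_zero_of_mem hb hc, zero_mul]

end Aux

/-- `CF(J_{C∪D}) = MP(C, D)`. -/
theorem stmt0 (n : ℕ) (hn : 1 ≤ n) (Co D : Set (Fin n → ZMod 2)) :
    CF n (neuralIdeal n (Co ∪ D)) = minReducedProducts n Co D := by
  ext f
  constructor
  · rintro ⟨hfJ, hfpm, hfmin⟩
    obtain ⟨σ, τ, hd, hfe⟩ := hfpm
    have hfe : f = pm σ τ := hfe
    have hC : f ∈ neuralIdeal n Co := by
      rw [hfe, pm_mem_iff hd]
      intro c hc
      rw [← hfe]
      exact eval_zero_of_mem hfJ (Set.mem_union_left _ hc)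
    have hD : f ∈ neuralIdeal n D := by
      rw [hfe, pm_mem_iff hd]
      intro c hc
      rw [← hfe]
      exact eval_zero_of_mem hfJ (Set.mem_union_right _ hc)
    obtain ⟨f₁, hf₁, q₁, hq₁⟩ :=
      exists_min_divisor (neuralIdeal n Co) f.totalDegree f rfl ⟨σ, τ, hd, hfe⟩ hC
    obtain ⟨f₂, hf₂, q₂, hq₂⟩ :=
      exists_min_divisor (neuralIdeal n D) f.totalDegree f rfl ⟨σ, τ, hd, hfe⟩ hD
    obtain ⟨s₁, t₁, hd₁, he₁⟩ := hf₁.2.1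
    obtain ⟨s₂, t₂, hd₂, he₂⟩ := hf₂.2.1
    have he₁ : f₁ = pm s₁ t₁ := he₁
    have he₂ : f₂ = pm s₂ t₂ := he₂
    obtain ⟨hs₁, ht₁⟩ := pm_dvd_structure hd ⟨q₁, by rw [← he₁, ← hfe]; exact hq₁⟩
    obtain ⟨hs₂, ht₂⟩ := pm_dvd_structure hd ⟨q₂, by rw [← he₂, ← hfe]; exact hq₂⟩
    have hsu : s₁ ∪ s₂ ⊆ σ := Finset.union_subset hs₁ hs₂
    have htu : t₁ ∪ t₂ ⊆ τ := Finset.union_subset ht₁ ht₂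
    have hdu : Disjoint (s₁ ∪ s₂) (t₁ ∪ t₂) := hd.mono hsu htu
    have hpJ : pm (s₁ ∪ s₂) (t₁ ∪ t₂) ∈ neuralIdeal n (Co ∪ D) :=
      pm_union_mem (he₁ ▸ hf₁.1) (he₂ ▸ hf₂.1) hdu
    have hdvd : ∃ h, f = pm (s₁ ∪ s₂) (t₁ ∪ t₂) * h :=
      ⟨pm (σ \ (s₁ ∪ s₂)) (τ \ (t₁ ∪ t₂)), by rw [hfe, pm_mul_sdiff hsu htu]⟩
    have hnd : ¬ (pm (s₁ ∪ s₂) (t₁ ∪ t₂)).totalDegree < f.totalDegree := fun hlt =>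
      hfmin ⟨pm (s₁ ∪ s₂) (t₁ ∪ t₂), ⟨_, _, hdu, rfl⟩, hpJ, hlt, hdvd⟩
    have hcard : σ.card + τ.card ≤ (s₁ ∪ s₂).card + (t₁ ∪ t₂).card := by
      rw [deg_pm hdu, hfe, deg_pm hd] at hnd
      omega
    have hseq : s₁ ∪ s₂ = σ :=
      Finset.eq_of_subset_of_card_le hsu (by have := Finset.card_le_card htu; omega)
    have hteq : t₁ ∪ t₂ = τ :=
      Finset.eq_of_subset_of_card_le htu (by have := Finset.card_le_card hsu; omega)
    have hfP : f ∈ reducedProducts n Co D := by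
      refine ⟨f₁, hf₁, f₂, hf₂, ?_⟩
      rw [he₁, he₂, sqReduce_pm_mul hd₁ hd₂ hdu, hseq, hteq, ← hfe]
    refine ⟨hfP, by rw [hfe]; exact pm_ne_zero hd, ?_⟩
    rintro ⟨p, ⟨a, haCF, b, hbCF, hpe⟩, g, hg1, hfg⟩
    obtain ⟨sa, ta, hda, hea⟩ := haCF.2.1
    obtain ⟨sb, tb, hdb, heb⟩ := hbCF.2.1
    have hea : a = pm sa ta := hea
    have heb : b = pm sb tb := heb
    by_cases hcomp : Disjoint (sa ∪ sb) (ta ∪ tb)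
    · have hpp : p = pm (sa ∪ sb) (ta ∪ tb) := by
        rw [hpe, hea, heb, sqReduce_pm_mul hda hdb hcomp]
      obtain ⟨hsa', hta'⟩ := pm_dvd_structure hd ⟨g, by rw [← hpp, ← hfe]; exact hfg⟩
      have hpJ' : pm (sa ∪ sb) (ta ∪ tb) ∈ neuralIdeal n (Co ∪ D) :=
        pm_union_mem (hea ▸ haCF.1) (heb ▸ hbCF.1) hcomp
      by_cases hlt : (pm (sa ∪ sb) (ta ∪ tb)).totalDegree < f.totalDegree
      · exact hfmin ⟨pm (sa ∪ sb) (ta ∪ tb), ⟨_, _, hcomp, rfl⟩, hpJ', hlt,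
          g, by rw [← hpp]; exact hfg⟩
      · have hcard' : σ.card + τ.card ≤ (sa ∪ sb).card + (ta ∪ tb).card := by
          rw [deg_pm hcomp, hfe, deg_pm hd] at hlt
          omega
        have hsequ : sa ∪ sb = σ := Finset.eq_of_subset_of_card_le hsa'
          (by have := Finset.card_le_card hta'; omega)
        have htequ : ta ∪ tb = τ := Finset.eq_of_subset_of_card_le hta'
          (by have := Finset.card_le_card hsa'; omega)
        have hpf : p = f := by rw [hpp, hsequ, htequ, ← hfe]
        have hfg' : f * 1 = f * g := by
          rw [mul_one]
          rw [hpf] at hfg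
          exact hfg
        have hgone : (1 : MvPolynomial (Fin n) (ZMod 2)) = g :=
          mul_left_cancel₀ (by rw [hfe]; exact pm_ne_zero hd) hfg'
        rw [← hgone, MvPolynomial.totalDegree_one] at hg1
        omega
    · have hp0 : p = 0 := by rw [hpe, hea, heb, sqReduce_pm_mul_zero hcomp]
      rw [hp0, zero_mul] at hfg
      exact pm_ne_zero hd (by rw [← hfe]; exact hfg)
  · rintro ⟨⟨f₁, hf₁, f₂, hf₂, hfe⟩, hne, hmin⟩
    obtain ⟨s₁, t₁, hd₁, he₁⟩ := hf₁.2.1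
    obtain ⟨s₂, t₂, hd₂, he₂⟩ := hf₂.2.1
    have he₁ : f₁ = pm s₁ t₁ := he₁
    have he₂ : f₂ = pm s₂ t₂ := he₂
    have hcomp : Disjoint (s₁ ∪ s₂) (t₁ ∪ t₂) := by
      by_contra hcon
      exact hne (by rw [hfe, he₁, he₂, sqReduce_pm_mul_zero hcon])
    have hfp : f = pm (s₁ ∪ s₂) (t₁ ∪ t₂) := by
      rw [hfe, he₁, he₂, sqReduce_pm_mul hd₁ hd₂ hcomp]
    have hmem : f ∈ neuralIdeal n (Co ∪ D) := by
      rw [hfp]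
      exact pm_union_mem (he₁ ▸ hf₁.1) (he₂ ▸ hf₂.1) hcomp
    refine ⟨hmem, ⟨_, _, hcomp, hfp⟩, ?_⟩
    rintro ⟨g, hgpm, hgJ, hgdeg, q, hgq⟩
    obtain ⟨sg, tg, hdg, heg⟩ := hgpm
    have heg : g = pm sg tg := heg
    have hgC : g ∈ neuralIdeal n Co := by
      rw [heg, pm_mem_iff hdg]
      intro c hc
      rw [← heg]
      exact eval_zero_of_mem hgJ (Set.mem_union_left _ hc)
    have hgD : g ∈ neuralIdeal n D := by
      rw [heg, pm_mem_iff hdg]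
      intro c hc
      rw [← heg]
      exact eval_zero_of_mem hgJ (Set.mem_union_right _ hc)
    obtain ⟨a, haCF, qa, hqa⟩ :=
      exists_min_divisor (neuralIdeal n Co) g.totalDegree g rfl ⟨sg, tg, hdg, heg⟩ hgC
    obtain ⟨b, hbCF, qb, hqb⟩ :=
      exists_min_divisor (neuralIdeal n D) g.totalDegree g rfl ⟨sg, tg, hdg, heg⟩ hgD
    obtain ⟨sa, ta, hda, hea⟩ := haCF.2.1
    obtain ⟨sb, tb, hdb, heb⟩ := hbCF.2.1
    have hea : a = pm sa ta := hea
    have heb : b = pm sb tb := heb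
    obtain ⟨hsa, hta⟩ := pm_dvd_structure hdg ⟨qa, by rw [← hea, ← heg]; exact hqa⟩
    obtain ⟨hsb, htb⟩ := pm_dvd_structure hdg ⟨qb, by rw [← heb, ← heg]; exact hqb⟩
    have hsu : sa ∪ sb ⊆ sg := Finset.union_subset hsa hsb
    have htu : ta ∪ tb ⊆ tg := Finset.union_subset hta htb
    have hdu : Disjoint (sa ∪ sb) (ta ∪ tb) := hdg.mono hsu htu
    have hpP : pm (sa ∪ sb) (ta ∪ tb) ∈ reducedProducts n Co D :=
      ⟨a, haCF, b, hbCF, by rw [hea, heb, sqReduce_pm_mul hda hdb hdu]⟩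
    set r : MvPolynomial (Fin n) (ZMod 2) := pm (sg \ (sa ∪ sb)) (tg \ (ta ∪ tb)) * q with hr
    have hfr : f = pm (sa ∪ sb) (ta ∪ tb) * r := by
      rw [hr, ← mul_assoc, pm_mul_sdiff hsu htu, ← heg, ← hgq]
    apply hmin
    refine ⟨pm (sa ∪ sb) (ta ∪ tb), hpP, r, ?_, hfr⟩
    by_contra hr0
    have hrdeg : r.totalDegree = 0 := by omega
    have hrc : r = C (coeff 0 r) := eq_C_of_deg_zero hrdeg
    rcases z01 (coeff 0 r) with h0 | h0
    · rw [hrc, h0, map_zero, mul_zero] at hfr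
      exact hne hfr
    · rw [hrc, h0, map_one, mul_one] at hfr
      have hdf : f.totalDegree = (sa ∪ sb).card + (ta ∪ tb).card := by rw [hfr, deg_pm hdu]
      have hdg2 : g.totalDegree = sg.card + tg.card := by rw [heg, deg_pm hdg]
      have hc1 := Finset.card_le_card hsu
      have hc2 := Finset.card_le_card htu
      omega
end

section
/- Let C ⊆ {0,1}ⁿ be a neural code and U = {U_1,…,U_n} open subsets of a topological space X with C = C(U). If x_σ·∏_{i∈τ}(1 − x_i) ∈ CF(J_C) for nonempty disjoint σ, τ ⊆ {1,…,n}, then U_σ ⊆ ⋃_{i∈τ} U_i, and moreover U_γ ⊄ ⋃_{i∈τ} U_i for every proper subset γ ⊊ σ, and U_σ ⊄ ⋃_{i∈γ} U_i for every proper subset γ ⊊ τ. -/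
open MvPolynomial

/-!
For disjoint `σ, τ`, the pseudo-monomial `x_σ ∏_{j ∈ τ} (1 - x_j)` is the sum of the `ρ_v` over
the words `v` that are `1` on `σ` and `0` on `τ`, while every element of `J_C` vanishes on `C`.
Hence it lies in `J_C` exactly when no codeword is `1` on `σ` and `0` on `τ`, which for
`C = C(U)` means `U_σ ⊆ ⋃_{j ∈ τ} U_j`. Membership of `f` itself gives the inclusion; an inclusion
for a proper `γ ⊂ σ` or `γ ⊂ τ` would put a proper divisor of `f` of smaller degree into `J_C`,
against minimality.
-/

namespace MvPolynomial

variable {R σ : Type*}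

theorem totalDegree_finsetProd_of_isDomain [CommSemiring R] [IsDomain R] {ι : Type*}
    (s : Finset ι) (f : ι → MvPolynomial σ R) (hf : ∀ i ∈ s, f i ≠ 0) :
    (∏ i ∈ s, f i).totalDegree = ∑ i ∈ s, (f i).totalDegree := by
  classical
  induction s using Finset.induction_on with
  | empty => simp
  | insert a s ha ih =>
    have hprod : ∏ i ∈ s, f i ≠ 0 := Finset.prod_ne_zero_iff.2 fun i hi => hf i (by simp [hi])
    rw [Finset.prod_insert ha, Finset.sum_insert ha,
      totalDegree_mul_of_isDomain (hf a (by simp)) hprod, ih fun i hi => hf i (by simp [hi])]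

theorem totalDegree_one_sub_X [CommRing R] [Nontrivial R] (i : σ) :
    (1 - X i : MvPolynomial σ R).totalDegree = 1 := by
  rw [sub_eq_neg_add, totalDegree_add_eq_left_of_totalDegree_lt] <;> simp [totalDegree_X]

end MvPolynomial

open Finset

section PseudoMonomial

variable {R ι : Type*} [CommRing R]

noncomputable def pseudoMonomial (σ τ : Finset ι) : MvPolynomial ι R :=
  (∏ i ∈ σ, X i) * ∏ j ∈ τ, (1 - X j)

theorem pseudoMonomial_dvd_pseudoMonomial {σ τ σ' τ' : Finset ι} (hσ : σ' ⊆ σ) (hτ : τ' ⊆ τ) :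
    (pseudoMonomial σ' τ' : MvPolynomial ι R) ∣ pseudoMonomial σ τ :=
  mul_dvd_mul (prod_dvd_prod_of_subset _ _ _ hσ) (prod_dvd_prod_of_subset _ _ _ hτ)

theorem eval_pseudoMonomial (σ τ : Finset ι) (v : ι → R) :
    eval v (pseudoMonomial σ τ) = (∏ i ∈ σ, v i) * ∏ j ∈ τ, (1 - v j) := by
  simp [pseudoMonomial, map_prod]

theorem totalDegree_pseudoMonomial [IsDomain R] (σ τ : Finset ι) :
    (pseudoMonomial σ τ : MvPolynomial ι R).totalDegree = #σ + #τ := by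
  have h1 : ∀ j : ι, (1 - X j : MvPolynomial ι R) ≠ 0 := fun j h => by
    simpa [h] using totalDegree_one_sub_X (R := R) j
  rw [pseudoMonomial, totalDegree_mul_of_isDomain (prod_ne_zero_iff.2 fun i _ => X_ne_zero i)
      (prod_ne_zero_iff.2 fun j _ => h1 j),
    totalDegree_finsetProd_of_isDomain _ _ fun i _ => X_ne_zero i,
    totalDegree_finsetProd_of_isDomain _ _ fun j _ => h1 j]
  simp [totalDegree_X, totalDegree_one_sub_X]

end PseudoMonomial

section NeuralIdeal

variable {n : ℕ}

theorem eval_rho_of_ne {v w : Fin n → ZMod 2} (h : v ≠ w) : eval v (rho n w) = 0 := by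
  obtain ⟨i, hi⟩ := Function.ne_iff.mp h
  simp only [rho, map_prod, map_sub, map_one, eval_C, eval_X]
  have hfactor : ∀ a b : ZMod 2, a ≠ b → 1 - b - a = 0 := by decide
  exact prod_eq_zero (mem_univ i) (hfactor _ _ hi)

theorem eval_eq_zero_of_mem_neuralIdeal {Co : Set (Fin n → ZMod 2)}
    {p : MvPolynomial (Fin n) (ZMod 2)} (hp : p ∈ neuralIdeal n Co) {v : Fin n → ZMod 2}
    (hv : v ∈ Co) : eval v p = 0 := by
  suffices neuralIdeal n Co ≤ RingHom.ker (eval v) from this hp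
  refine Ideal.span_le.2 ?_
  rintro _ ⟨w, hw, rfl⟩
  exact eval_rho_of_ne fun h => hw (h ▸ hv)

def boxValues (σ τ : Finset (Fin n)) (i : Fin n) : Finset (ZMod 2) :=
  if i ∈ σ then {1} else if i ∈ τ then {0} else univ

theorem mem_piFinset_boxValues {σ τ : Finset (Fin n)} (hστ : Disjoint σ τ) (v : Fin n → ZMod 2) :
    v ∈ Fintype.piFinset (boxValues σ τ) ↔ (∀ i ∈ σ, v i = 1) ∧ ∀ j ∈ τ, v j = 0 := by
  simp only [Fintype.mem_piFinset, boxValues]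
  constructor
  · intro h
    refine ⟨fun i hi => by simpa [hi] using h i, fun j hj => ?_⟩
    simpa [disjoint_right.1 hστ hj, hj] using h j
  · rintro ⟨h1, h0⟩ i
    split_ifs with hσ hτ <;> simp [*]

theorem sum_boxValues {σ τ : Finset (Fin n)} (hστ : Disjoint σ τ) (i : Fin n) :
    ∑ a ∈ boxValues σ τ i, (1 - C a - X i : MvPolynomial (Fin n) (ZMod 2)) =
      (if i ∈ σ then X i else 1) * (if i ∈ τ then 1 - X i else 1) := by
  by_cases hσ : i ∈ σ
  · simp [boxValues, hσ, disjoint_left.1 hστ hσ, CharTwo.neg_eq]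
  by_cases hτ : i ∈ τ
  · simp [boxValues, hσ, hτ]
  have huniv : (univ : Finset (ZMod 2)) = {0, 1} := rfl
  simp [boxValues, hσ, hτ, huniv, sum_pair zero_ne_one, CharTwo.neg_eq]

theorem pseudoMonomial_eq_sum_rho {σ τ : Finset (Fin n)} (hστ : Disjoint σ τ) :
    pseudoMonomial σ τ = ∑ v ∈ Fintype.piFinset (boxValues σ τ), rho n v := by
  calc pseudoMonomial σ τ = ∏ i, ∑ a ∈ boxValues σ τ i, (1 - C a - X i) := by
        simp only [sum_boxValues hστ, prod_mul_distrib, prod_ite_mem, univ_inter, pseudoMonomial]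
    _ = _ := prod_univ_sum _ _

theorem pseudoMonomial_mem_neuralIdeal_iff {Co : Set (Fin n → ZMod 2)} {σ τ : Finset (Fin n)}
    (hστ : Disjoint σ τ) :
    pseudoMonomial σ τ ∈ neuralIdeal n Co ↔
      ∀ v ∈ Co, ¬((∀ i ∈ σ, v i = 1) ∧ ∀ j ∈ τ, v j = 0) := by
  constructor
  · rintro hmem v hv ⟨h1, h0⟩
    have := eval_eq_zero_of_mem_neuralIdeal hmem hv
    rw [eval_pseudoMonomial, prod_congr rfl h1,
      prod_congr (s₁ := τ) rfl fun j hj => by rw [h0 j hj, sub_zero]] at this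
    simp at this
  · intro hCo
    rw [pseudoMonomial_eq_sum_rho hστ]
    refine Ideal.sum_mem _ fun v hv => Ideal.subset_span ⟨v, fun hvCo => ?_, rfl⟩
    exact hCo v hvCo ((mem_piFinset_boxValues hστ v).1 hv)

end NeuralIdeal

section CodeOfCover

variable {Ω : Type*} [TopologicalSpace Ω] {n : ℕ} (U : Fin n → Set Ω)

open Classical in
theorem indicator_mem_codeOfCover (p : Ω) :
    (fun i => if p ∈ U i then 1 else 0 : Fin n → ZMod 2) ∈ codeOfCover n U := by
  refine ⟨p, Set.mem_iInter₂.2 fun i hi => ?_, fun hp => ?_⟩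
  · by_contra hpi
    simp [hpi] at hi
  · obtain ⟨j, hj, hpj⟩ := Set.mem_iUnion₂.1 hp
    simp [hpj] at hj

theorem biInter_subset_biUnion_iff_forall_codeOfCover (σ τ : Finset (Fin n)) :
    (⋂ i ∈ σ, U i) ⊆ ⋃ j ∈ τ, U j ↔
      ∀ v ∈ codeOfCover n U, ¬((∀ i ∈ σ, v i = 1) ∧ ∀ j ∈ τ, v j = 0) := by
  constructor
  · rintro hsub v ⟨p, hp1, hp0⟩ ⟨h1, h0⟩
    have hpσ : p ∈ ⋂ i ∈ σ, U i := Set.mem_iInter₂.2 fun i hi => Set.mem_iInter₂.1 hp1 i (h1 i hi)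
    obtain ⟨j, hj, hpj⟩ := Set.mem_iUnion₂.1 (hsub hpσ)
    exact hp0 (Set.mem_iUnion₂.2 ⟨j, h0 j hj, hpj⟩)
  · intro hcode p hp
    classical
    by_contra hpτ
    refine hcode _ (indicator_mem_codeOfCover U p) ⟨fun i hi => ?_, fun j hj => ?_⟩
    · simp [Set.mem_iInter₂.1 hp i hi]
    · simpa using fun hpj => hpτ (Set.mem_iUnion₂.2 ⟨j, hj, hpj⟩)

theorem pseudoMonomial_mem_neuralIdeal_codeOfCover_iff {σ τ : Finset (Fin n)}
    (hστ : Disjoint σ τ) :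
    pseudoMonomial σ τ ∈ neuralIdeal n (codeOfCover n U) ↔ (⋂ i ∈ σ, U i) ⊆ ⋃ j ∈ τ, U j :=
  (pseudoMonomial_mem_neuralIdeal_iff hστ).trans
    (biInter_subset_biUnion_iff_forall_codeOfCover U σ τ).symm

end CodeOfCover

theorem pseudoMonomial_notMem_of_mem_CF {n : ℕ} {J : Ideal (MvPolynomial (Fin n) (ZMod 2))}
    {σ τ σ' τ' : Finset (Fin n)} (h : pseudoMonomial σ τ ∈ CF n J) (hστ : Disjoint σ τ)
    (hσ : σ' ⊆ σ) (hτ : τ' ⊆ τ) (hlt : #σ' + #τ' < #σ + #τ) : pseudoMonomial σ' τ' ∉ J :=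
  fun hmem => h.2.2 ⟨_, ⟨σ', τ', hστ.mono hσ hτ, rfl⟩, hmem,
    show (pseudoMonomial σ' τ' : MvPolynomial _ _).totalDegree < (pseudoMonomial σ τ).totalDegree by
      rwa [totalDegree_pseudoMonomial, totalDegree_pseudoMonomial],
    pseudoMonomial_dvd_pseudoMonomial hσ hτ⟩

theorem stmt4_general (n : ℕ) {Ω : Type*} [TopologicalSpace Ω]
    (U : Fin n → Set Ω) (Co : Set (Fin n → ZMod 2)) (hCo : Co = codeOfCover n U)
    (σ τ : Finset (Fin n)) (hστ : Disjoint σ τ)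
    (h : ((∏ i ∈ σ, X i) * ∏ i ∈ τ, (1 - X i)) ∈ CF n (neuralIdeal n Co)) :
    (⋂ i ∈ σ, U i) ⊆ (⋃ i ∈ τ, U i) ∧
      (∀ γ ⊂ σ, ¬ (⋂ i ∈ γ, U i) ⊆ ⋃ i ∈ τ, U i) ∧
      (∀ γ ⊂ τ, ¬ (⋂ i ∈ σ, U i) ⊆ ⋃ i ∈ γ, U i) := by
  subst hCo
  refine ⟨(pseudoMonomial_mem_neuralIdeal_codeOfCover_iff U hστ).1 h.1,
    fun γ hγ hsub => ?_, fun γ hγ hsub => ?_⟩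
  · have hcard := card_lt_card hγ
    exact pseudoMonomial_notMem_of_mem_CF h hστ hγ.subset subset_rfl (by omega)
      ((pseudoMonomial_mem_neuralIdeal_codeOfCover_iff U (hστ.mono_left hγ.subset)).2 hsub)
  · have hcard := card_lt_card hγ
    exact pseudoMonomial_notMem_of_mem_CF h hστ subset_rfl hγ.subset (by omega)
      ((pseudoMonomial_mem_neuralIdeal_codeOfCover_iff U (hστ.mono_right hγ.subset)).2 hsub)

/-- Type 2 relations. -/
theorem stmt4 (n : ℕ) (hn : 1 ≤ n) {Ω : Type*} [TopologicalSpace Ω]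
    (U : Fin n → Set Ω) (Co : Set (Fin n → ZMod 2)) (hCo : Co = codeOfCover n U)
    (σ τ : Finset (Fin n)) (hσ : σ.Nonempty) (hτ : τ.Nonempty) (hστ : Disjoint σ τ)
    (h : ((∏ i ∈ σ, X i) * ∏ i ∈ τ, (1 - X i)) ∈ CF n (neuralIdeal n Co)) :
    (⋂ i ∈ σ, U i) ⊆ (⋃ i ∈ τ, U i) ∧
      (∀ γ ⊂ σ, ¬ (⋂ i ∈ γ, U i) ⊆ ⋃ i ∈ τ, U i) ∧
      (∀ γ ⊂ τ, ¬ (⋂ i ∈ σ, U i) ⊆ ⋃ i ∈ γ, U i) :=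
  stmt4_general n U Co hCo σ τ hστ h
end

section
/- Let C, D ⊆ {0,1}ⁿ be neural codes. Then every minimal reduced product is a minimal pseudo-monomial of J_{C∪D}: MP(C, D) ⊆ CF(J_{C∪D}). -/
open MvPolynomial

/-!
Write `f = x^σ₁ (1 - x)^τ₁` and `g = x^σ₂ (1 - x)^τ₂`. Modulo the Boolean ideal every `xᵢ` and
`1 - xᵢ` is idempotent, so `(f g)_R` is `0` when `σ₁ ∪ σ₂` meets `τ₁ ∪ τ₂`, and otherwise the
pseudo-monomial `h = x^(σ₁ ∪ σ₂) (1 - x)^(τ₁ ∪ τ₂)`, a common multiple of `f` and `g`.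
A pseudo-monomial lies in `J_S` iff it vanishes on `S`; hence `J_{C∪D}` contains exactly the
pseudo-monomials lying in both `J_C` and `J_D`, and `h` is one of them. If a pseudo-monomial
`q ∈ J_{C∪D}` of smaller degree divided `h`, then `q` would be divisible by some `f' ∈ CF(J_C)`
and `g' ∈ CF(J_D)`, so `(f' g')_R ∣ q ∣ h` with a cofactor of positive degree, against the
minimality of `h` in `P(C, D)`.
-/

open Finset

lemma Finset.isIdempotentElem_prod {ι M : Type*} [CommMonoid M] {s : Finset ι} {f : ι → M}
    (hf : ∀ i ∈ s, IsIdempotentElem (f i)) : IsIdempotentElem (∏ i ∈ s, f i) :=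
  Finset.prod_induction f IsIdempotentElem (fun _ _ ha hb => ha.mul hb) .one hf

lemma Finset.prod_union_of_isIdempotentElem {ι M : Type*} [CommMonoid M] [DecidableEq ι]
    {f : ι → M} (hf : ∀ i, IsIdempotentElem (f i)) (s t : Finset ι) :
    ∏ i ∈ s ∪ t, f i = (∏ i ∈ s, f i) * ∏ i ∈ t, f i := by
  have hsub : s ∩ t ⊆ s ∪ t := inter_subset_left.trans subset_union_left
  have hidem : IsIdempotentElem (∏ i ∈ s ∩ t, f i) := isIdempotentElem_prod fun i _ => hf i
  rw [← prod_union_inter, ← prod_sdiff hsub, mul_assoc, hidem.eq]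

lemma MvPolynomial.one_le_totalDegree_of_totalDegree_lt {σ R : Type*} [CommRing R] [IsDomain R]
    {p q r : MvPolynomial σ R} (hp : p ≠ 0) (h : p = q * r) (hlt : q.totalDegree < p.totalDegree) :
    1 ≤ r.totalDegree := by
  subst h
  rw [totalDegree_mul_of_isDomain (left_ne_zero_of_mul hp) (right_ne_zero_of_mul hp)] at hlt
  omega

namespace NeuralCode

variable {n : ℕ}

noncomputable def pseudoMonomial (σ τ : Finset (Fin n)) : MvPolynomial (Fin n) (ZMod 2) :=
  (∏ i ∈ σ, X i) * ∏ j ∈ τ, (1 - X j)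

lemma eval_pseudoMonomial_ne_zero_iff (v : Fin n → ZMod 2) (σ τ : Finset (Fin n)) :
    eval v (pseudoMonomial σ τ) ≠ 0 ↔ (∀ i ∈ σ, v i ≠ 0) ∧ ∀ j ∈ τ, v j ≠ 1 := by
  simp only [pseudoMonomial, map_mul, map_prod, eval_X, map_sub, map_one, ne_eq, mul_eq_zero,
    not_or, prod_eq_zero_iff, not_exists, not_and, sub_eq_zero, eq_comm (a := (1 : ZMod 2))]

lemma pseudoMonomial_dvd_pseudoMonomial {σ τ σ' τ' : Finset (Fin n)} (hσ : σ' ⊆ σ)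
    (hτ : τ' ⊆ τ) : pseudoMonomial σ' τ' ∣ pseudoMonomial σ τ :=
  mul_dvd_mul (prod_dvd_prod_of_subset _ _ _ hσ) (prod_dvd_prod_of_subset _ _ _ hτ)

lemma pseudoMonomial_dvd_pseudoMonomial_iff {σ τ σ' τ' : Finset (Fin n)} (h : Disjoint σ τ) :
    pseudoMonomial σ' τ' ∣ pseudoMonomial σ τ ↔ σ' ⊆ σ ∧ τ' ⊆ τ := by
  refine ⟨fun hdvd => ?_, fun hs => pseudoMonomial_dvd_pseudoMonomial hs.1 hs.2⟩
  have key : ∀ v, eval v (pseudoMonomial σ τ) ≠ 0 → eval v (pseudoMonomial σ' τ') ≠ 0 :=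
    fun v hv => ne_zero_of_dvd_ne_zero hv (map_dvd (eval v) hdvd)
  constructor
  · intro i hi
    have := key (fun j => if j ∈ σ then 1 else 0) <| by
      rw [eval_pseudoMonomial_ne_zero_iff]
      exact ⟨fun j hj => by simp [hj], fun j hj => by simp [disjoint_right.mp h hj]⟩
    by_contra hiσ
    exact (eval_pseudoMonomial_ne_zero_iff _ _ _).mp this |>.1 i hi (by simp [hiσ])
  · intro j hj
    have := key (fun i => if i ∈ τ then 0 else 1) <| by
      rw [eval_pseudoMonomial_ne_zero_iff]
      exact ⟨fun i hi => by simp [disjoint_left.mp h hi], fun i hi => by simp [hi]⟩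
    by_contra hjτ
    exact (eval_pseudoMonomial_ne_zero_iff _ _ _).mp this |>.2 j hj (by simp [hjτ])

lemma eval_rho_of_ne {v w : Fin n → ZMod 2} (h : w ≠ v) : eval w (rho n v) = 0 := by
  obtain ⟨i, hi⟩ := Function.ne_iff.mp h
  simp only [rho, map_prod, map_sub, map_one, eval_C, eval_X]
  refine prod_eq_zero (mem_univ i) ?_
  revert hi
  generalize w i = a
  generalize v i = b
  revert a b
  decide

lemma eval_eq_zero_of_mem_neuralIdeal {S : Set (Fin n → ZMod 2)}
    {f : MvPolynomial (Fin n) (ZMod 2)} (hf : f ∈ neuralIdeal n S) {v : Fin n → ZMod 2}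
    (hv : v ∈ S) : eval v f = 0 := by
  induction hf using Submodule.span_induction with
  | mem p hp =>
    obtain ⟨w, hw, rfl⟩ := hp
    exact eval_rho_of_ne (ne_of_mem_of_not_mem hv hw)
  | zero => simp
  | add _ _ _ _ ha hb => simp [ha, hb]
  | smul _ _ _ hb => simp [hb]

-- Each factor of a pseudo-monomial is `∑ b ∈ A, (1 - b - xᵢ)` for `A = {1}`, `{0}` or `𝔽₂`
-- (the last sum being `1`), so expanding the product writes it as a sum of `ρ_v`.
lemma pseudoMonomial_eq_sum_rho {σ τ : Finset (Fin n)} (h : Disjoint σ τ) :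
    pseudoMonomial σ τ = ∑ v ∈ Fintype.piFinset (fun i =>
      if i ∈ σ then {1} else if i ∈ τ then {0} else univ), rho n v := by
  have factor : ∀ i, ∑ b ∈ (if i ∈ σ then {1} else if i ∈ τ then {0} else univ),
      (1 - C b - X i : MvPolynomial (Fin n) (ZMod 2)) =
      (if i ∈ σ then X i else 1) * (if i ∈ τ then 1 - X i else 1) := by
    intro i
    by_cases hσ : i ∈ σ
    · simp [hσ, disjoint_left.mp h hσ, CharTwo.neg_eq]
    · by_cases hτ : i ∈ τ
      · simp [hσ, hτ]
      · simp only [hσ, hτ, if_false, mul_one]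
        rw [Fintype.sum_eq_add 0 1 (by decide)
          fun b hb => ((by decide : ∀ b : ZMod 2, ¬(b ≠ 0 ∧ b ≠ 1)) b hb).elim]
        simp [CharTwo.neg_eq]
  calc pseudoMonomial σ τ
      = ∏ i, (if i ∈ σ then X i else 1) * (if i ∈ τ then 1 - X i else 1) := by
        rw [prod_mul_distrib, prod_ite_mem, prod_ite_mem, univ_inter, univ_inter, pseudoMonomial]
    _ = _ := by simp_rw [← factor]; exact prod_univ_sum _ _

lemma pseudoMonomial_mem_neuralIdeal_iff {S : Set (Fin n → ZMod 2)} {σ τ : Finset (Fin n)}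
    (h : Disjoint σ τ) :
    pseudoMonomial σ τ ∈ neuralIdeal n S ↔ ∀ v ∈ S, eval v (pseudoMonomial σ τ) = 0 := by
  refine ⟨fun hmem v hv => eval_eq_zero_of_mem_neuralIdeal hmem hv, fun hvan => ?_⟩
  rw [pseudoMonomial_eq_sum_rho h]
  refine Ideal.sum_mem _ fun v hv => Ideal.subset_span ⟨v, fun hvS => ?_, rfl⟩
  rw [Fintype.mem_piFinset] at hv
  refine (eval_pseudoMonomial_ne_zero_iff v σ τ).mpr ⟨fun i hi => ?_, fun j hj => ?_⟩ (hvan v hvS)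
  · have := hv i
    rw [if_pos hi, mem_singleton] at this
    simp [this]
  · have := hv j
    rw [if_neg (disjoint_right.mp h hj), if_pos hj, mem_singleton] at this
    simp [this]

lemma IsPseudoMonomial.mem_neuralIdeal_union_iff {C D : Set (Fin n → ZMod 2)}
    {f : MvPolynomial (Fin n) (ZMod 2)} (hf : IsPseudoMonomial n f) :
    f ∈ neuralIdeal n (C ∪ D) ↔ f ∈ neuralIdeal n C ∧ f ∈ neuralIdeal n D := by
  obtain ⟨σ, τ, h, rfl⟩ := hf
  simp only [← pseudoMonomial.eq_def, pseudoMonomial_mem_neuralIdeal_iff h, Set.mem_union,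
    forall₂_or_left]

lemma exists_mem_CF_dvd {J : Ideal (MvPolynomial (Fin n) (ZMod 2))}
    {f : MvPolynomial (Fin n) (ZMod 2)} (hf : IsPseudoMonomial n f) (hfJ : f ∈ J) :
    ∃ g ∈ CF n J, g ∣ f := by
  obtain ⟨g, ⟨hg, hgJ, hgf⟩, hmin⟩ := (measure totalDegree).wf.has_min
    {g | IsPseudoMonomial n g ∧ g ∈ J ∧ g ∣ f} ⟨f, hf, hfJ, dvd_rfl⟩
  refine ⟨g, ⟨hgJ, hg, fun ⟨g', hg', hg'J, hlt, k, hk⟩ => ?_⟩, hgf⟩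
  exact hmin g' ⟨hg', hg'J, (Dvd.intro k hk.symm).trans hgf⟩ hlt

lemma IsSquareFreePoly.eq_zero_of_eval_eq_zero {p : MvPolynomial (Fin n) (ZMod 2)}
    (hp : IsSquareFreePoly n p) (hvan : ∀ v, eval v p = 0) : p = 0 :=
  eq_zero_of_eval_zero_at_prod_finset p (fun _ => univ)
    (fun i => Nat.lt_succ_of_le (degreeOf_le_iff.mpr fun m hm => hp m hm i))
    (fun v _ => hvan v)

lemma eval_eq_zero_of_mem_boolIdeal {f : MvPolynomial (Fin n) (ZMod 2)} (hf : f ∈ boolIdeal n)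
    (v : Fin n → ZMod 2) : eval v f = 0 := by
  induction hf using Submodule.span_induction with
  | mem p hp =>
    obtain ⟨i, rfl⟩ := hp
    simp only [map_mul, map_sub, map_one, eval_X]
    generalize v i = a
    revert a
    decide
  | zero => simp
  | add _ _ _ _ ha hb => simp [ha, hb]
  | smul _ _ _ hb => simp [hb]

lemma X_mul_one_sub_X_mem_boolIdeal (i : Fin n) : X i * (1 - X i) ∈ boolIdeal n :=
  Ideal.subset_span ⟨i, rfl⟩

lemma isIdempotentElem_mk_X (i : Fin n) :
    IsIdempotentElem (Ideal.Quotient.mk (boolIdeal n) (X i)) := by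
  rw [IsIdempotentElem, ← map_mul, Ideal.Quotient.eq]
  rw [show (X i * X i - X i : MvPolynomial (Fin n) (ZMod 2)) = -(X i * (1 - X i)) by ring]
  exact neg_mem (X_mul_one_sub_X_mem_boolIdeal i)

lemma mk_monomial_mapRange_min (m : Fin n →₀ ℕ) (c : ZMod 2) :
    Ideal.Quotient.mk (boolIdeal n) (monomial (m.mapRange (fun e => min e 1) (by simp)) c) =
      Ideal.Quotient.mk (boolIdeal n) (monomial m c) := by
  rw [monomial_eq, monomial_eq, Finsupp.prod_mapRange_index (by simp), map_mul, map_mul,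
    Finsupp.prod, Finsupp.prod, map_prod, map_prod]
  congr 1
  refine prod_congr rfl fun i hi => ?_
  obtain ⟨e, he⟩ := Nat.exists_eq_add_one_of_ne_zero (Finsupp.mem_support_iff.mp hi)
  rw [he, map_pow, map_pow, (isIdempotentElem_mk_X i).pow_succ_eq, min_eq_right (by omega),
    pow_one]

lemma sub_sqReduce_mem_boolIdeal (f : MvPolynomial (Fin n) (ZMod 2)) :
    f - sqReduce n f ∈ boolIdeal n := by
  rw [← Ideal.Quotient.eq, sqReduce, map_sum]
  conv_lhs => rw [← support_sum_monomial_coeff f, map_sum]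
  exact sum_congr rfl fun m _ => (mk_monomial_mapRange_min m _).symm

lemma isSquareFreePoly_sqReduce (f : MvPolynomial (Fin n) (ZMod 2)) :
    IsSquareFreePoly n (sqReduce n f) := by
  intro m hm i
  obtain ⟨m', -, hm'⟩ := mem_biUnion.mp (support_sum hm)
  rw [mem_singleton.mp (support_monomial_subset hm')]
  simp

lemma sqReduce_eq_of_sub_mem_boolIdeal {f p : MvPolynomial (Fin n) (ZMod 2)}
    (hp : IsSquareFreePoly n p) (hfp : f - p ∈ boolIdeal n) : sqReduce n f = p := by
  have hsf : IsSquareFreePoly n (sqReduce n f - p) := fun m hm =>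
    (mem_union.mp (support_sub _ _ _ hm)).elim (isSquareFreePoly_sqReduce f m) (hp m)
  have hmem : sqReduce n f - p ∈ boolIdeal n := by
    simpa using sub_mem hfp (sub_sqReduce_mem_boolIdeal f)
  exact sub_eq_zero.mp
    (IsSquareFreePoly.eq_zero_of_eval_eq_zero hsf (eval_eq_zero_of_mem_boolIdeal hmem))

lemma isSquareFreePoly_pseudoMonomial {σ τ : Finset (Fin n)} (h : Disjoint σ τ) :
    IsSquareFreePoly n (pseudoMonomial σ τ) := by
  intro m hm i
  have hdeg : degreeOf i (pseudoMonomial σ τ) ≤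
      (if i ∈ σ then 1 else 0) + if i ∈ τ then 1 else 0 :=
    calc degreeOf i (pseudoMonomial σ τ)
        ≤ ∑ j ∈ σ, degreeOf i (X j : MvPolynomial (Fin n) (ZMod 2)) +
            ∑ j ∈ τ, degreeOf i (1 - X j : MvPolynomial (Fin n) (ZMod 2)) :=
          (degreeOf_mul_le i _ _).trans
            (add_le_add (degreeOf_prod_le i σ _) (degreeOf_prod_le i τ _))
      _ ≤ ∑ j ∈ σ, degreeOf i (X j : MvPolynomial (Fin n) (ZMod 2)) +
            ∑ j ∈ τ, degreeOf i (X j : MvPolynomial (Fin n) (ZMod 2)) := by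
          gcongr with j
          exact (degreeOf_sub_le i 1 (X j)).trans (by rw [degreeOf_one, zero_max])
      _ = _ := by simp only [degreeOf_X, sum_ite_eq]
  have hle : (if i ∈ σ then 1 else 0) + (if i ∈ τ then 1 else 0) ≤ 1 := by
    have : i ∈ σ → i ∉ τ := fun hi => disjoint_left.mp h hi
    split_ifs <;> tauto
  exact degreeOf_le_iff.mp (hdeg.trans hle) m hm

lemma mk_pseudoMonomial_mul_pseudoMonomial (σ₁ τ₁ σ₂ τ₂ : Finset (Fin n)) :
    Ideal.Quotient.mk (boolIdeal n) (pseudoMonomial σ₁ τ₁ * pseudoMonomial σ₂ τ₂) =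
      Ideal.Quotient.mk (boolIdeal n) (pseudoMonomial (σ₁ ∪ σ₂) (τ₁ ∪ τ₂)) := by
  simp only [pseudoMonomial, map_mul, map_prod, map_sub, map_one]
  rw [prod_union_of_isIdempotentElem isIdempotentElem_mk_X,
    prod_union_of_isIdempotentElem fun i => (isIdempotentElem_mk_X i).one_sub]
  ring

lemma pseudoMonomial_mem_boolIdeal {σ τ : Finset (Fin n)} (h : ¬Disjoint σ τ) :
    pseudoMonomial σ τ ∈ boolIdeal n := by
  obtain ⟨i, hσ, hτ⟩ := not_disjoint_iff.mp h
  exact Ideal.mem_of_dvd _ (mul_dvd_mul (dvd_prod_of_mem _ hσ) (dvd_prod_of_mem _ hτ))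
    (X_mul_one_sub_X_mem_boolIdeal i)

lemma sqReduce_pseudoMonomial_mul_pseudoMonomial (σ₁ τ₁ σ₂ τ₂ : Finset (Fin n)) :
    sqReduce n (pseudoMonomial σ₁ τ₁ * pseudoMonomial σ₂ τ₂) =
      if Disjoint (σ₁ ∪ σ₂) (τ₁ ∪ τ₂) then pseudoMonomial (σ₁ ∪ σ₂) (τ₁ ∪ τ₂) else 0 := by
  have hmk := mk_pseudoMonomial_mul_pseudoMonomial σ₁ τ₁ σ₂ τ₂
  rw [Ideal.Quotient.eq] at hmk
  split_ifs with h
  · exact sqReduce_eq_of_sub_mem_boolIdeal (isSquareFreePoly_pseudoMonomial h) hmk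
  · refine sqReduce_eq_of_sub_mem_boolIdeal (fun m hm => by simp at hm) ?_
    simpa using add_mem hmk (pseudoMonomial_mem_boolIdeal h)

lemma IsPseudoMonomial.sqReduce_mul {f g : MvPolynomial (Fin n) (ZMod 2)}
    (hf : IsPseudoMonomial n f) (hg : IsPseudoMonomial n g) (hne : sqReduce n (f * g) ≠ 0) :
    IsPseudoMonomial n (sqReduce n (f * g)) ∧ f ∣ sqReduce n (f * g) ∧ g ∣ sqReduce n (f * g) := by
  obtain ⟨σ₁, τ₁, -, rfl⟩ := hf
  obtain ⟨σ₂, τ₂, -, rfl⟩ := hg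
  simp only [← pseudoMonomial.eq_def, sqReduce_pseudoMonomial_mul_pseudoMonomial] at hne ⊢
  split_ifs at hne ⊢ with h
  · exact ⟨⟨_, _, h, rfl⟩,
      pseudoMonomial_dvd_pseudoMonomial subset_union_left subset_union_left,
      pseudoMonomial_dvd_pseudoMonomial subset_union_right subset_union_right⟩
  · exact absurd rfl hne

lemma sqReduce_mul_dvd {f g q : MvPolynomial (Fin n) (ZMod 2)} (hf : IsPseudoMonomial n f)
    (hg : IsPseudoMonomial n g) (hq : IsPseudoMonomial n q) (hfq : f ∣ q) (hgq : g ∣ q) :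
    sqReduce n (f * g) ∣ q := by
  obtain ⟨σ₁, τ₁, -, rfl⟩ := hf
  obtain ⟨σ₂, τ₂, -, rfl⟩ := hg
  obtain ⟨σ, τ, h, rfl⟩ := hq
  simp only [← pseudoMonomial.eq_def, pseudoMonomial_dvd_pseudoMonomial_iff h] at hfq hgq ⊢
  have hσ := union_subset hfq.1 hgq.1
  have hτ := union_subset hfq.2 hgq.2
  rw [sqReduce_pseudoMonomial_mul_pseudoMonomial, if_pos (h.mono hσ hτ)]
  exact pseudoMonomial_dvd_pseudoMonomial hσ hτ

end NeuralCode

open NeuralCode in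
theorem stmt8_general (n : ℕ) (Co D : Set (Fin n → ZMod 2)) :
    minReducedProducts n Co D ⊆ CF n (neuralIdeal n (Co ∪ D)) := by
  rintro _ ⟨⟨f, hf, g, hg, rfl⟩, hne, hmin⟩
  obtain ⟨hpm, hfdvd, hgdvd⟩ := hf.2.1.sqReduce_mul hg.2.1 hne
  refine ⟨hpm.mem_neuralIdeal_union_iff.mpr
    ⟨Ideal.mem_of_dvd _ hfdvd hf.1, Ideal.mem_of_dvd _ hgdvd hg.1⟩, hpm, ?_⟩
  rintro ⟨q, hq, hqJ, hlt, k, hk⟩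
  obtain ⟨hqCo, hqD⟩ := hq.mem_neuralIdeal_union_iff.mp hqJ
  obtain ⟨f', hf', hf'q⟩ := exists_mem_CF_dvd hq hqCo
  obtain ⟨g', hg', hg'q⟩ := exists_mem_CF_dvd hq hqD
  have hrq := sqReduce_mul_dvd hf'.2.1 hg'.2.1 hq hf'q hg'q
  obtain ⟨k', hk'⟩ := hrq.trans (Dvd.intro k hk.symm)
  have hq0 : q ≠ 0 := left_ne_zero_of_mul (hk ▸ hne)
  refine hmin ⟨_, ⟨f', hf', g', hg', rfl⟩, k', ?_, hk'⟩
  exact one_le_totalDegree_of_totalDegree_lt hne hk'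
    ((totalDegree_le_of_dvd_of_isDomain hrq hq0).trans_lt hlt)

/-- `MP(C, D) ⊆ CF(J_{C∪D})`. -/
theorem stmt8 (n : ℕ) (hn : 1 ≤ n) (Co D : Set (Fin n → ZMod 2)) :
    minReducedProducts n Co D ⊆ CF n (neuralIdeal n (Co ∪ D)) :=
  stmt8_general n Co D
end
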